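/- In the four-element monounary algebra A = {1, 2, 3, 4} with S(1) = 2, S(2) = 1, S(3) = 4, S(4) = 4, the proportion 1 : 2 :: 4 : 4 holds, while the proportion 1 : 2 :: 3 : 4 fails; in particular, the arrow proportion 2 → 1 ∴ 4 → 3 fails because Jus(2, 1) ∩ Jus(4, 3) is strictly contained in Jus(2, 1) ∩ Jus(4, 4). -/
import Mathlib


/-- The set of justifications of a pair `(x, y)` in the monounary algebra `(A, S)`:
pairs `(k, ℓ)` such that `S^[k] o = x` and `S^[ℓ] o = y` for some `o`. -/
def Jus {A : Type*} (S : A → A) (x y : A) : Set (ℕ × ℕ) :=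
  {p | ∃ o : A, S^[p.1] o = x ∧ S^[p.2] o = y}

/-- The arrow proportion `x → y ∴ u → v` in the monounary algebra `(A, S)`. -/
def ArrowP {A : Type*} (S : A → A) (x y u v : A) : Prop :=
  (∀ p ∈ Jus S x y ∪ Jus S u v, p.1 = p.2) ∨
  ((Jus S x y ∩ Jus S u v).Nonempty ∧
    ∀ v' : A, Jus S x y ∩ Jus S u v ⊆ Jus S x y ∩ Jus S u v' →
      Jus S x y ∩ Jus S u v' ⊆ Jus S x y ∩ Jus S u v)

/-- The analogical proportion `a : b :: c : d` in the monounary algebra `(A, S)`. -/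
def AP {A : Type*} (S : A → A) (a b c d : A) : Prop :=
  ArrowP S a b c d ∧ ArrowP S b a d c ∧ ArrowP S c d a b ∧ ArrowP S d c b a

/-- The algebra {1, 2, 3, 4} = {0, 1, 2, 3} with S(1)=2, S(2)=1, S(3)=4, S(4)=4. -/
def S18 : Fin 4 → Fin 4 :=
  ![1, 0, 3, 3]

/-- `3` is a fixed point of `S18`. -/
lemma S18_iter3 : ∀ k, S18^[k] 3 = 3
  | 0 => rfl
  | k + 1 => by rw [Function.iterate_succ_apply]; exact S18_iter3 k

/-- Every pair is a justification of `(3, 3)`. -/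
lemma mem_Jus33 (p : ℕ × ℕ) : p ∈ Jus S18 3 3 := ⟨3, S18_iter3 _, S18_iter3 _⟩

lemma mem10_10 : ((1,0) : ℕ × ℕ) ∈ Jus S18 1 0 := ⟨0, rfl, rfl⟩
lemma mem01_10 : ((0,1) : ℕ × ℕ) ∈ Jus S18 1 0 := ⟨1, rfl, rfl⟩
lemma mem01_01 : ((0,1) : ℕ × ℕ) ∈ Jus S18 0 1 := ⟨0, rfl, rfl⟩
lemma mem10_01 : ((1,0) : ℕ × ℕ) ∈ Jus S18 0 1 := ⟨1, rfl, rfl⟩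

lemma key1 {v' : Fin 4} (h : ((1,0) : ℕ × ℕ) ∈ Jus S18 0 v') : v' = 1 := by
  obtain ⟨o, h1, h2⟩ := h
  fin_cases o <;> simp_all [S18]

lemma key2 {v' : Fin 4} (h : ((1,0) : ℕ × ℕ) ∈ Jus S18 1 v') : v' = 0 := by
  obtain ⟨o, h1, h2⟩ := h
  fin_cases o <;> simp_all [S18]

lemma key3 : ((0,1) : ℕ × ℕ) ∉ Jus S18 3 2 := by
  rintro ⟨o, h1, h2⟩
  fin_cases o <;> simp_all [S18]

lemma not_arrow_1032 : ¬ ArrowP S18 1 0 3 2 := by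
  rintro (h | ⟨-, h⟩)
  · exact absurd (h (1,0) (Or.inl ⟨0, rfl, rfl⟩)) one_ne_zero
  · have h3 := h 3 (fun p hp => ⟨hp.1, mem_Jus33 p⟩)
    exact key3 (h3 ⟨mem01_10, mem_Jus33 _⟩).2

theorem example_proportions :
    AP S18 0 1 3 3 ∧ ¬ AP S18 0 1 2 3 ∧ ¬ ArrowP S18 1 0 3 2 ∧
    Jus S18 1 0 ∩ Jus S18 3 2 ⊂ Jus S18 1 0 ∩ Jus S18 3 3 := by
  refine ⟨⟨?_, ?_, ?_, ?_⟩, ?_, not_arrow_1032, ?_, ?_⟩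
  · exact Or.inr ⟨⟨(0,1), mem01_01, mem_Jus33 _⟩,
      fun v' _ p hp => ⟨hp.1, mem_Jus33 p⟩⟩
  · exact Or.inr ⟨⟨(1,0), mem10_10, mem_Jus33 _⟩,
      fun v' _ p hp => ⟨hp.1, mem_Jus33 p⟩⟩
  · refine Or.inr ⟨⟨(1,0), mem_Jus33 _, mem10_01⟩, fun v' h => ?_⟩
    have hv := key1 (h ⟨mem_Jus33 _, mem10_01⟩).2
    rw [hv]
  · refine Or.inr ⟨⟨(1,0), mem_Jus33 _, mem10_10⟩, fun v' h => ?_⟩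
    have hv := key2 (h ⟨mem_Jus33 _, mem10_10⟩).2
    rw [hv]
  · exact fun h => not_arrow_1032 h.2.1
  · exact fun p hp => ⟨hp.1, mem_Jus33 p⟩
  · exact fun h => key3 (h ⟨mem01_10, mem_Jus33 _⟩).2
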